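/- For every real x ≥ 9, (1/x)·Q(√x) ≥ exp(−x). Moreover, the function x ↦ (1/x)·Q(√x) is decreasing on (0, ∞), and consequently for every x > 0, (1/x)·Q(√x) ≥ exp(−max{x, 9}). -/

import Mathlib

/-!
The lower bound comes from the Mills-ratio estimate `√(2π) Q(t) ≥ t / (1 + t²) · e^{-t²/2}`:
the function `-t / (1 + t²) · e^{-t²/2}` has derivative `e^{-t²/2} (t⁴ + 2t² - 1) / (1 + t²)²`,
which is at most `e^{-t²/2}`, so integrating over `(t, ∞)` bounds the Gaussian tail from below.
With `t = √x` the claim reduces to `√(2π) · √x · (1 + x) ≤ e^{x/2}` for `x ≥ 9`, which the degree-7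
Taylor polynomial of the exponential already certifies. Monotonicity is clear since both `1/x` and
`Q(√x)` are nonnegative and decreasing, and it transfers the bound at `x = 9` to all `x ≤ 9`.
-/

/-- The standard Gaussian tail function `Q(x) = (1/√(2π)) ∫_x^∞ exp(−z²/2) dz`. -/
noncomputable def gaussQ (x : ℝ) : ℝ :=
  (Real.sqrt (2 * Real.pi))⁻¹ * ∫ z in Set.Ioi x, Real.exp (-z ^ 2 / 2)

open MeasureTheory Real Set Filter Topology

lemma integrable_exp_neg_sq_div_two : Integrable fun z : ℝ => exp (-z ^ 2 / 2) := by
  simpa [neg_div, div_eq_inv_mul] using integrable_exp_neg_mul_sq (b := 1 / 2) (by norm_num)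

lemma hasDerivAt_neg_div_one_add_sq_mul_exp (z : ℝ) :
    HasDerivAt (fun z : ℝ => -(z / (1 + z ^ 2) * exp (-z ^ 2 / 2)))
      (exp (-z ^ 2 / 2) * (z ^ 4 + 2 * z ^ 2 - 1) / (1 + z ^ 2) ^ 2) z := by
  have hne : 1 + z ^ 2 ≠ 0 := by positivity
  have hfrac : HasDerivAt (fun z : ℝ => z / (1 + z ^ 2))
      ((1 * (1 + z ^ 2) - z * (2 * z)) / (1 + z ^ 2) ^ 2) z := by
    simpa using (hasDerivAt_id z).fun_div ((hasDerivAt_pow 2 z).const_add 1) hne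
  have hexp : HasDerivAt (fun z : ℝ => exp (-z ^ 2 / 2)) (exp (-z ^ 2 / 2) * (-(2 * z) / 2)) z := by
    simpa using ((hasDerivAt_pow 2 z).neg.div_const 2).exp
  refine (hfrac.fun_mul hexp).fun_neg.congr_deriv ?_
  field_simp
  ring

lemma abs_poly_le_one_add_sq_sq (z : ℝ) : |z ^ 4 + 2 * z ^ 2 - 1| ≤ (1 + z ^ 2) ^ 2 := by
  rw [abs_le]
  constructor <;> nlinarith [sq_nonneg z, sq_nonneg (z ^ 2)]

lemma integrable_exp_mul_poly_div_one_add_sq_sq :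
    Integrable fun z : ℝ => exp (-z ^ 2 / 2) * (z ^ 4 + 2 * z ^ 2 - 1) / (1 + z ^ 2) ^ 2 := by
  refine integrable_exp_neg_sq_div_two.mono
    (Continuous.aestronglyMeasurable (by fun_prop (disch := intro; positivity)))
    (ae_of_all _ fun z => ?_)
  rw [norm_div, norm_mul, Real.norm_of_nonneg (exp_pos _).le,
    Real.norm_of_nonneg (by positivity : (0 : ℝ) ≤ (1 + z ^ 2) ^ 2), Real.norm_eq_abs,
    div_le_iff₀ (by positivity)]
  exact mul_le_mul_of_nonneg_left (abs_poly_le_one_add_sq_sq z) (exp_pos _).le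

lemma tendsto_div_one_add_sq_mul_exp_atTop :
    Tendsto (fun z : ℝ => z / (1 + z ^ 2) * exp (-z ^ 2 / 2)) atTop (𝓝 0) := by
  have hexp : Tendsto (fun z : ℝ => exp (-z ^ 2 / 2)) atTop (𝓝 0) := by
    refine tendsto_exp_atBot.comp ?_
    simpa only [neg_div] using
      tendsto_neg_atBot_iff.mpr ((tendsto_pow_atTop two_ne_zero).atTop_div_const two_pos)
  refine squeeze_zero' ?_ ?_ hexp <;> filter_upwards [eventually_ge_atTop 0] with z hz
  · positivity
  · have hfrac : z / (1 + z ^ 2) ≤ 1 := by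
      rw [div_le_one (by positivity)]
      nlinarith [sq_nonneg (z - 1)]
    simpa using mul_le_mul_of_nonneg_right hfrac (exp_pos (-z ^ 2 / 2)).le

lemma div_one_add_sq_mul_exp_le_integral_Ioi (t : ℝ) :
    t / (1 + t ^ 2) * exp (-t ^ 2 / 2) ≤ ∫ z in Ioi t, exp (-z ^ 2 / 2) := by
  have hFTC := integral_Ioi_of_hasDerivAt_of_tendsto' (a := t)
    (fun z _ => hasDerivAt_neg_div_one_add_sq_mul_exp z)
    integrable_exp_mul_poly_div_one_add_sq_sq.integrableOn
    (by simpa using tendsto_div_one_add_sq_mul_exp_atTop.neg)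
  have hle : ∫ z in Ioi t, exp (-z ^ 2 / 2) * (z ^ 4 + 2 * z ^ 2 - 1) / (1 + z ^ 2) ^ 2
      ≤ ∫ z in Ioi t, exp (-z ^ 2 / 2) := by
    refine setIntegral_mono integrable_exp_mul_poly_div_one_add_sq_sq.integrableOn
      integrable_exp_neg_sq_div_two.integrableOn fun z => ?_
    rw [div_le_iff₀ (by positivity)]
    exact mul_le_mul_of_nonneg_left (abs_le.mp (abs_poly_le_one_add_sq_sq z)).2 (exp_pos _).le
  rw [hFTC] at hle
  linarith

lemma sqrt_two_pi_mul_sqrt_mul_one_add_le_exp {x : ℝ} (hx : 9 ≤ x) :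
    √(2 * π) * √x * (1 + x) ≤ exp (x / 2) := by
  have hpi : √(2 * π) ≤ 2.6 :=
    sqrt_le_iff.mpr ⟨by norm_num, by nlinarith [pi_lt_d2]⟩
  have hsqrt : √x ≤ x / 3 := sqrt_le_iff.mpr ⟨by linarith, by nlinarith⟩
  have htaylor :
      2.6 * (x / 3) * (1 + x) ≤ ∑ i ∈ Finset.range 8, (x / 2) ^ i / (i.factorial : ℝ) := by
    -- in the variable `x - 9` the difference of the two sides has only positive coefficients
    obtain ⟨y, hy, rfl⟩ : ∃ y, 0 ≤ y ∧ x = 9 + y := ⟨x - 9, by linarith, by ring⟩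
    simp only [Finset.sum_range_succ, Finset.sum_range_zero, Nat.factorial]
    push_cast
    nlinarith [pow_nonneg hy 2, pow_nonneg hy 3, pow_nonneg hy 4, pow_nonneg hy 5,
      pow_nonneg hy 6, pow_nonneg hy 7]
  calc √(2 * π) * √x * (1 + x) ≤ 2.6 * (x / 3) * (1 + x) := by gcongr
    _ ≤ _ := htaylor.trans (sum_le_exp_of_nonneg (by linarith) 8)

lemma gaussQ_nonneg (t : ℝ) : 0 ≤ gaussQ t :=
  mul_nonneg (by positivity) (setIntegral_nonneg measurableSet_Ioi fun z _ => (exp_pos _).le)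

lemma gaussQ_antitone : Antitone gaussQ := fun s t hst =>
  mul_le_mul_of_nonneg_left (setIntegral_mono_set integrable_exp_neg_sq_div_two.integrableOn
    (ae_of_all _ fun z => (exp_pos _).le) (Ioi_subset_Ioi hst).eventuallyLE) (by positivity)

lemma div_one_add_sq_mul_exp_le_gaussQ (t : ℝ) :
    (√(2 * π))⁻¹ * (t / (1 + t ^ 2) * exp (-t ^ 2 / 2)) ≤ gaussQ t :=
  mul_le_mul_of_nonneg_left (div_one_add_sq_mul_exp_le_integral_Ioi t) (by positivity)

lemma exp_neg_le_inv_mul_gaussQ_sqrt {x : ℝ} (hx : 9 ≤ x) : exp (-x) ≤ 1 / x * gaussQ √x := by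
  have hx0 : 0 < x := by linarith
  have hexp : exp (x / 2) * exp (-x) = exp (-x / 2) := by rw [← exp_add]; ring_nf
  calc exp (-x)
      = 1 / x * ((√(2 * π))⁻¹ * (√x / (1 + x) * (√(2 * π) * √x * (1 + x) * exp (-x)))) := by
        field_simp
        rw [sq_sqrt hx0.le]
    _ ≤ 1 / x * ((√(2 * π))⁻¹ * (√x / (1 + x) * (exp (x / 2) * exp (-x)))) := by
        gcongr
        exact sqrt_two_pi_mul_sqrt_mul_one_add_le_exp hx
    _ = 1 / x * ((√(2 * π))⁻¹ * (√x / (1 + √x ^ 2) * exp (-√x ^ 2 / 2))) := by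
        rw [hexp, sq_sqrt hx0.le]
    _ ≤ 1 / x * gaussQ √x := by
        gcongr
        exact div_one_add_sq_mul_exp_le_gaussQ √x

lemma antitoneOn_inv_mul_gaussQ_sqrt :
    AntitoneOn (fun x : ℝ => 1 / x * gaussQ √x) (Ioi 0) := fun _ ha _ _ hab =>
  mul_le_mul (one_div_le_one_div_of_le ha hab) (gaussQ_antitone (sqrt_le_sqrt hab))
    (gaussQ_nonneg _) (one_div_pos.mpr ha).le

/-- **Numerical tail inequality (eq. (25)).**
For `x ≥ 9`, `(1/x)·Q(√x) ≥ exp(−x)`; moreover `x ↦ (1/x)·Q(√x)` is decreasing on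
`(0, ∞)`, and consequently `(1/x)·Q(√x) ≥ exp(−max{x, 9})` for every `x > 0`. -/
theorem inv_mul_gaussQ_sqrt_ge :
    (∀ x : ℝ, 9 ≤ x → 1 / x * gaussQ (Real.sqrt x) ≥ Real.exp (-x)) ∧
    AntitoneOn (fun x : ℝ => 1 / x * gaussQ (Real.sqrt x)) (Set.Ioi 0) ∧
    (∀ x : ℝ, 0 < x → 1 / x * gaussQ (Real.sqrt x) ≥ Real.exp (-(max x 9))) := by
  refine ⟨fun x => exp_neg_le_inv_mul_gaussQ_sqrt, antitoneOn_inv_mul_gaussQ_sqrt, fun x hx => ?_⟩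
  rcases le_total 9 x with h | h
  · rw [max_eq_left h]
    exact exp_neg_le_inv_mul_gaussQ_sqrt h
  · rw [max_eq_right h]
    exact (exp_neg_le_inv_mul_gaussQ_sqrt le_rfl).trans
      (antitoneOn_inv_mul_gaussQ_sqrt hx (by norm_num : (0 : ℝ) < 9) h)
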